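/- arXiv:2303.03985 — 3 statements merged into one kernel-verified Lean document; each statement's English description precedes it below -/
import Mathlib

section
/- Consider the two backward Bellman recursions V^e and V^i defined on a finite horizon d = 0,…,D+1 with common nonincreasing final function K, where V^e_d(x) = inf_u { L_d(x,u) + V^e_{d+1}(f_d(x,u)) } and V^i_d(x) = inf_{u, x'} { L_d(x,u) + V^i_{d+1}(x') : f_d(x,u) ≥ x' }. If every V^e_d (d = 0,…,D+1) is nonincreasing with respect to the componentwise order on ℝⁿ, then V^i_d = V^e_d for every d ∈ {0,…,D+1}. -/
/-!
When `Ve (d + 1)` is antitone, the cheapest `x' ≤ f d x u` in the relaxed recursion is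
`f d x u` itself, so both recursions take the same step; backward induction from the common
final cost `K` then identifies them at every stage.
-/

open scoped ENNReal

theorem Antitone.biInf_le_eq {α β : Type*} [Preorder α] [CompleteLattice β] {g : α → β}
    (hg : Antitone g) (y : α) : ⨅ x ∈ {x | x ≤ y}, g x = g y :=
  le_antisymm (biInf_le g (le_refl y)) (le_iInf₂ fun _ hx => hg hx)

theorem iInf_biInf_le_eq_iInf_of_antitone {ι α β : Type*} [Preorder α] [CompleteLattice β]
    {g : ι → α → β} (hg : ∀ i, Antitone (g i)) (y : ι → α) :
    ⨅ i, ⨅ x ∈ {x | x ≤ y i}, g i x = ⨅ i, g i (y i) :=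
  iInf_congr fun i => (hg i).biInf_le_eq (y i)

theorem relaxed_bellman_eq_equality_bellman_of_antitone_general
    {n : ℕ} {U : ℕ → Type*} (D : ℕ)
    (L : (d : ℕ) → (Fin n → ℝ) → U d → ℝ≥0∞)
    (f : (d : ℕ) → (Fin n → ℝ) → U d → (Fin n → ℝ))
    (K : (Fin n → ℝ) → ℝ≥0∞)
    (Ve Vi : ℕ → (Fin n → ℝ) → ℝ≥0∞)
    (hVeK : Ve (D + 1) = K)
    (hViK : Vi (D + 1) = K)
    (hVe : ∀ d ≤ D, ∀ x, Ve d x = ⨅ u : U d, L d x u + Ve (d + 1) (f d x u))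
    (hVi : ∀ d ≤ D, ∀ x,
      Vi d x = ⨅ u : U d, ⨅ x' ∈ {x' : Fin n → ℝ | x' ≤ f d x u},
        L d x u + Vi (d + 1) x')
    (hmono : ∀ d ≤ D + 1, Antitone (Ve d)) :
    ∀ d ≤ D + 1, Vi d = Ve d := by
  refine fun d hd => Nat.decreasingInduction (motive := fun d _ => Vi d = Ve d)
    (fun k hk hnext => ?_) (hViK.trans hVeK.symm) hd
  have hkD : k ≤ D := Nat.lt_succ_iff.mp hk
  funext x
  rw [hVi k hkD, hVe k hkD, hnext]
  exact iInf_biInf_le_eq_iInf_of_antitone (fun u => (hmono (k + 1) hk).const_add (L k x u)) _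

/-- If the equality-constrained Bellman value functions are nonincreasing
(for the componentwise order on `ℝⁿ`), then the relaxed (inequality-constrained)
Bellman value functions coincide with them at every stage. -/
theorem relaxed_bellman_eq_equality_bellman_of_antitone
    {n : ℕ} {U : ℕ → Type*} (D : ℕ)
    (L : (d : ℕ) → (Fin n → ℝ) → U d → ℝ≥0∞)
    (f : (d : ℕ) → (Fin n → ℝ) → U d → (Fin n → ℝ))
    (K : (Fin n → ℝ) → ℝ≥0∞) (hK : Antitone K)
    (Ve Vi : ℕ → (Fin n → ℝ) → ℝ≥0∞)
    (hVeK : Ve (D + 1) = K)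
    (hViK : Vi (D + 1) = K)
    (hVe : ∀ d ≤ D, ∀ x, Ve d x = ⨅ u : U d, L d x u + Ve (d + 1) (f d x u))
    (hVi : ∀ d ≤ D, ∀ x,
      Vi d x = ⨅ u : U d, ⨅ x' ∈ {x' : Fin n → ℝ | x' ≤ f d x u},
        L d x u + Vi (d + 1) x')
    (hmono : ∀ d ≤ D + 1, Antitone (Ve d)) :
    ∀ d ≤ D + 1, Vi d = Ve d :=
  relaxed_bellman_eq_equality_bellman_of_antitone_general D L f K Ve Vi hVeK hViK hVe hVi hmono
end

section
/- Let V_d, d = 0,…,D+1, be defined by the backward recursion V_{D+1} = K and V_d(x) = inf_{u, x'} { L_d(x,u) + V_{d+1}(x') : f_d(x,u) ≥ x' }. Define the dualized recursion by V̲_{D+1} = K and V̲_d(x) = sup_{p ≤ 0} ( L^P_d(x,p) − (V̲_{d+1})*(p) ), where L^P_d(x,p) = inf_u ( L_d(x,u) + ⟨p, f_d(x,u)⟩ ) and * denotes the Fenchel conjugate (with lower Moreau addition conventions for ±∞). Then V̲_d ≤ V_d for every d ∈ {0,…,D+1}. -/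
open scoped ENNReal BigOperators

/-- The standard scalar product on `ℝⁿ`. -/
noncomputable def dotp {n : ℕ} (p x : Fin n → ℝ) : ℝ := ∑ i, p i * x i

/-!
Weak duality, stage by stage. For a price `p ≤ 0`, a control `u` and a target `x' ≤ f d x u`,
Fenchel–Young gives `(V̲_{d+1})*(p) ≥ ⟨p, x'⟩ - V̲_{d+1}(x')`, and `⟨p, f d x u⟩ ≤ ⟨p, x'⟩`
because `p ≤ 0`; so the dual objective at `p` is at most `L d x u + V̲_{d+1}(x')`, and backward
induction bounds this by `L d x u + V_{d+1}(x')`.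
-/

theorem EReal.coe_ennreal_iInf {ι : Sort*} (g : ι → ℝ≥0∞) :
    ((⨅ i, g i : ℝ≥0∞) : EReal) = ⨅ i, (g i : EReal) :=
  Monotone.map_iInf_of_continuousAt continuous_coe_ennreal_ereal.continuousAt
    EReal.coe_ennreal_strictMono.monotone EReal.coe_ennreal_top

theorem dotp_le_dotp_of_nonpos {n : ℕ} {p a b : Fin n → ℝ} (hp : p ≤ 0) (hab : a ≤ b) :
    dotp p b ≤ dotp p a :=
  Finset.sum_le_sum fun i _ => mul_le_mul_of_nonpos_left (hab i) (hp i)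

theorem EReal.add_coe_sub_coe_sub_le {r s : ℝ} (hrs : r ≤ s) (a v : EReal) :
    a + r - (s - v) ≤ a + v := by
  induction v with
  | bot => simp [EReal.sub_bot (EReal.coe_ne_bot s)]
  | top =>
    induction a with
    | bot => simp
    | coe a => simp [← EReal.coe_add]
    | top => simp
  | coe v =>
    induction a with
    | bot => simp
    | coe a =>
      norm_cast
      linarith
    | top => simp

noncomputable def fenchelConj {n : ℕ} (V : (Fin n → ℝ) → EReal) (p : Fin n → ℝ) : EReal :=
  ⨆ x, ((dotp p x : ℝ) : EReal) - V x

theorem dotp_sub_le_fenchelConj {n : ℕ} (V : (Fin n → ℝ) → EReal) (p x : Fin n → ℝ) :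
    ((dotp p x : ℝ) : EReal) - V x ≤ fenchelConj V p :=
  le_iSup (fun x => ((dotp p x : ℝ) : EReal) - V x) x

theorem price_dual_le_bellman {n : ℕ} {ι : Type*} (ℓ : ι → ℝ≥0∞) (g : ι → Fin n → ℝ)
    {V : (Fin n → ℝ) → EReal} {W : (Fin n → ℝ) → ℝ≥0∞} (hVW : ∀ y, V y ≤ W y) :
    (⨆ p ∈ {p : Fin n → ℝ | p ≤ 0},
        (⨅ u, (ℓ u : EReal) + ((dotp p (g u) : ℝ) : EReal))
          - fenchelConj V p)
      ≤ ((⨅ u, ⨅ y ∈ {y : Fin n → ℝ | y ≤ g u}, ℓ u + W y : ℝ≥0∞) : EReal) := by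
  simp only [EReal.coe_ennreal_iInf]
  refine iSup₂_le fun p hp => le_iInf fun u => le_iInf fun y => le_iInf fun hy => ?_
  calc _ ≤ (ℓ u : EReal) + ((dotp p (g u) : ℝ) : EReal) - (((dotp p y : ℝ) : EReal) - V y) :=
        EReal.sub_le_sub (iInf_le _ u) (dotp_sub_le_fenchelConj V p y)
    _ ≤ ℓ u + V y := EReal.add_coe_sub_coe_sub_le (dotp_le_dotp_of_nonpos hp hy) _ _
    _ ≤ ((ℓ u + W y : ℝ≥0∞) : EReal) := by
      rw [EReal.coe_ennreal_add]
      gcongr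
      exact hVW y

-- Mathlib's `EReal` addition satisfies `⊥ + ⊤ = ⊥`: it is Moreau's lower addition.
/-- The price (dual) backward recursion yields lower bounds of the relaxed
(inequality-constrained) Bellman value functions at every stage.
Here `(V̲_{d+1})*` is the Fenchel conjugate, and additions/subtractions of
extended reals follow Moreau's lower addition convention
(in Mathlib's `EReal`, `⊥ + ⊤ = ⊥`). -/
theorem price_decomposition_lower_bound
    {n : ℕ} {U : ℕ → Type*} (D : ℕ)
    (L : (d : ℕ) → (Fin n → ℝ) → U d → ℝ≥0∞)
    (f : (d : ℕ) → (Fin n → ℝ) → U d → (Fin n → ℝ))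
    (K : (Fin n → ℝ) → ℝ≥0∞)
    (Vi : ℕ → (Fin n → ℝ) → ℝ≥0∞)
    (Vlow : ℕ → (Fin n → ℝ) → EReal)
    (hViK : Vi (D + 1) = K)
    (hVlowK : ∀ x, Vlow (D + 1) x = (K x : EReal))
    (hVi : ∀ d ≤ D, ∀ x,
      Vi d x = ⨅ u : U d, ⨅ x' ∈ {x' : Fin n → ℝ | x' ≤ f d x u},
        L d x u + Vi (d + 1) x')
    (hVlow : ∀ d ≤ D, ∀ x,
      Vlow d x = ⨆ p ∈ {p : Fin n → ℝ | p ≤ 0},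
        ((⨅ u : U d, ((L d x u : EReal) + ((dotp p (f d x u) : ℝ) : EReal)))
          - (⨆ x' : Fin n → ℝ, ((dotp p x' : ℝ) : EReal) - Vlow (d + 1) x')) ) :
    ∀ d ≤ D + 1, ∀ x, Vlow d x ≤ (Vi d x : EReal) := by
  intro d hd
  induction hd using Nat.decreasingInduction with
  | self => intro x; rw [hVlowK, hViK]
  | of_succ d hd ih =>
    intro x
    rw [hVlow d (Nat.le_of_lt_succ hd), hVi d (Nat.le_of_lt_succ hd)]
    exact price_dual_le_bellman _ _ ih
end

section
/- By backward induction on t from T down to 0: if the final cost K is nonincreasing in (s,h), then all Bellman value functions V_t of the battery problem are nonincreasing in (s,h). -/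
open MeasureTheory Set
open scoped ENNReal

/-!
A control `u` that is feasible from `(s, h)` stays feasible from a larger state `(s', h')`
unless it would overcharge the battery beyond `S̄`; in that case the smaller control
`(S̄ − s') / ρᶜ` fills the battery exactly. Either way the stage cost does not increase and the
successor state dominates the one reached from `(s, h)`, so monotonicity of the next value
function passes to the infimum, then to the expectation, and backward induction concludes.
-/

/-- Feasible charge/discharge controls for the battery problem:
`S̲ − s ≤ ρᶜ u⁺ − ρᵈ u⁻ ≤ S̄ − s`, `u⁺ + u⁻ ≤ h`, `U̲ ≤ u ≤ Ū`. -/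
def feasible (ρc ρd Slo Shi Ulo Uhi s h : ℝ) : Set ℝ :=
  {u : ℝ | Slo - s ≤ ρc * max u 0 - ρd * max (-u) 0 ∧
    ρc * max u 0 - ρd * max (-u) 0 ≤ Shi - s ∧
    max u 0 + max (-u) 0 ≤ h ∧ Ulo ≤ u ∧ u ≤ Uhi}

/-- One-step battery value:
`inf { c (u−w)⁺ + Vnext(s + ρᶜu⁺ − ρᵈu⁻, h − u⁺ − u⁻) : u feasible }`. -/
noncomputable def oneStep (ρc ρd Slo Shi Ulo Uhi c : ℝ)
    (Vnext : ℝ → ℝ → ℝ≥0∞) (s h w : ℝ) : ℝ≥0∞ :=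
  ⨅ u ∈ feasible ρc ρd Slo Shi Ulo Uhi s h,
    ENNReal.ofReal (c * max (u - w) 0) +
      Vnext (s + ρc * max u 0 - ρd * max (-u) 0) (h - max u 0 - max (-u) 0)

theorem AntitoneOn.lintegral {Ω α : Type*} [MeasurableSpace Ω] [Preorder α] {μ : Measure Ω}
    {f : Ω → α → ℝ≥0∞} {D : Set α} (hf : ∀ ω, AntitoneOn (f ω) D) :
    AntitoneOn (fun x => ∫⁻ ω, f ω x ∂μ) D :=
  fun _ hx _ hy hxy => lintegral_mono fun ω => hf ω hx hy hxy

section BatteryStep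

variable {ρc ρd Slo Shi Ulo Uhi : ℝ}

theorem exists_feasible_le_of_le (hρc : 0 < ρc) (hρd : 0 ≤ ρd) (hUlo : Ulo ≤ 0)
    {s s' h h' u : ℝ} (hs : s ≤ s') (hs' : s' ≤ Shi) (hh : h ≤ h')
    (hu : u ∈ feasible ρc ρd Slo Shi Ulo Uhi s h) :
    ∃ v ∈ feasible ρc ρd Slo Shi Ulo Uhi s' h', v ≤ u ∧
      s + ρc * max u 0 - ρd * max (-u) 0 ≤ s' + ρc * max v 0 - ρd * max (-v) 0 ∧
      h - max u 0 - max (-u) 0 ≤ h' - max v 0 - max (-v) 0 := by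
  obtain ⟨hlo, hhi, hcap, hUlo_u, hu_Uhi⟩ := hu
  by_cases hfit : ρc * max u 0 - ρd * max (-u) 0 ≤ Shi - s'
  · exact ⟨u, ⟨by linarith, hfit, by linarith, hUlo_u, hu_Uhi⟩, le_rfl, by linarith, by linarith⟩
  have hu_pos : 0 < u := by
    by_contra! hu_nonpos
    rw [max_eq_right hu_nonpos, max_eq_left (neg_nonneg.2 hu_nonpos)] at hfit
    nlinarith
  rw [max_eq_left hu_pos.le, max_eq_right (by linarith : -u ≤ 0)] at hlo hhi hcap hfit ⊢
  set v := (Shi - s') / ρc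
  have hv_nonneg : 0 ≤ v := div_nonneg (by linarith) hρc.le
  have hρc_v : ρc * v = Shi - s' := mul_div_cancel₀ _ hρc.ne'
  have hv_le : v ≤ u := by nlinarith
  have hv_pos_part : max v 0 = v := max_eq_left hv_nonneg
  have hv_neg_part : max (-v) 0 = 0 := max_eq_right (by linarith)
  refine ⟨v, ?_, hv_le, ?_, ?_⟩ <;> simp only [feasible, mem_ofPred_eq, hv_pos_part, hv_neg_part]
  · exact ⟨by linarith, by linarith, by linarith, by linarith, by linarith⟩
  all_goals linarith

theorem antitoneOn_oneStep (hρc : 0 < ρc) (hρd : 0 ≤ ρd) (hUlo : Ulo ≤ 0) {c : ℝ} (hc : 0 ≤ c)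
    {Vnext : ℝ → ℝ → ℝ≥0∞} (hV : AntitoneOn (Function.uncurry Vnext) (Icc Slo Shi ×ˢ univ))
    (w : ℝ) :
    AntitoneOn (fun x : ℝ × ℝ => oneStep ρc ρd Slo Shi Ulo Uhi c Vnext x.1 x.2 w)
      (Icc Slo Shi ×ˢ univ) := by
  rintro ⟨s, h⟩ - ⟨s', h'⟩ ⟨⟨-, hs'_hi⟩, -⟩ ⟨hs, hh⟩
  refine le_iInf₂ fun u hu => ?_
  obtain ⟨v, hv, hvu, hs_next, hh_next⟩ := exists_feasible_le_of_le hρc hρd hUlo hs hs'_hi hh hu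
  have hnext_mem : ∀ {s h u}, u ∈ feasible ρc ρd Slo Shi Ulo Uhi s h →
      (s + ρc * max u 0 - ρd * max (-u) 0, h - max u 0 - max (-u) 0) ∈ Icc Slo Shi ×ˢ univ :=
    fun hu => ⟨⟨by linarith [hu.1], by linarith [hu.2.1]⟩, trivial⟩
  refine iInf₂_le_of_le v hv (add_le_add ?_ (hV (hnext_mem hu) (hnext_mem hv) ⟨hs_next, hh_next⟩))
  gcongr

end BatteryStep

theorem battery_bellman_antitone_general
    {Ω : Type*} [MeasurableSpace Ω] (μ : Measure Ω)
    (T : ℕ) (W : ℕ → Ω → ℝ)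
    (ρc ρd Slo Shi Ulo Uhi : ℝ) (c : ℕ → ℝ)
    (hρc : 0 < ρc) (hρd : 0 < ρd)
    (hUlo : Ulo ≤ 0) (hc : ∀ t, 0 ≤ c t)
    (K : ℝ → ℝ → ℝ≥0∞)
    (hK : ∀ s₁ s₂ h₁ h₂ : ℝ, s₁ ≤ s₂ → h₁ ≤ h₂ → K s₂ h₂ ≤ K s₁ h₁)
    (V : ℕ → ℝ → ℝ → ℝ≥0∞)
    (hVT : V T = K)
    (hV : ∀ t < T, ∀ s h : ℝ,
      V t s h = ∫⁻ ω, oneStep ρc ρd Slo Shi Ulo Uhi (c t) (V (t + 1)) s h (W t ω) ∂μ) :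
    ∀ t ≤ T, ∀ s s' h h' : ℝ,
      Slo ≤ s → s ≤ s' → s' ≤ Shi → h ≤ h' → V t s' h' ≤ V t s h := by
  have hanti : ∀ t ≤ T, AntitoneOn (Function.uncurry (V t)) (Icc Slo Shi ×ˢ univ) := by
    intro t ht
    induction ht using Nat.decreasingInduction with
    | self =>
      rw [hVT]
      exact fun x _ y _ hxy => hK _ _ _ _ hxy.1 hxy.2
    | of_succ t ht ih =>
      have hVt : Function.uncurry (V t) = fun x => ∫⁻ ω,
          oneStep ρc ρd Slo Shi Ulo Uhi (c t) (V (t + 1)) x.1 x.2 (W t ω) ∂μ :=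
        funext fun x => hV t ht x.1 x.2
      rw [hVt]
      exact AntitoneOn.lintegral fun ω => antitoneOn_oneStep hρc hρd.le hUlo (hc t) ih (W t ω)
  intro t ht s s' h h' hs hss' hs' hh
  exact hanti t ht ⟨⟨hs, hss'.trans hs'⟩, trivial⟩ ⟨⟨hs.trans hss', hs'⟩, trivial⟩
    (Prod.mk_le_mk.2 ⟨hss', hh⟩)

/-- Backward induction for the battery problem: if the final cost `K` is
nonincreasing in `(s,h)`, then every Bellman value function `V t` of the battery
problem is nonincreasing in `(s,h)` (with the state of charge within `[S̲,S̄]`). -/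
theorem battery_bellman_antitone
    {Ω : Type*} [MeasurableSpace Ω] (μ : Measure Ω) [IsProbabilityMeasure μ]
    (T : ℕ) (W : ℕ → Ω → ℝ)
    (ρc ρd Slo Shi Ulo Uhi : ℝ) (c : ℕ → ℝ)
    (hρc : 0 < ρc) (hρd : 0 < ρd) (hS : Slo ≤ Shi)
    (hUlo : Ulo ≤ 0) (hUhi : 0 ≤ Uhi) (hc : ∀ t, 0 ≤ c t)
    (K : ℝ → ℝ → ℝ≥0∞)
    (hK : ∀ s₁ s₂ h₁ h₂ : ℝ, s₁ ≤ s₂ → h₁ ≤ h₂ → K s₂ h₂ ≤ K s₁ h₁)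
    (V : ℕ → ℝ → ℝ → ℝ≥0∞)
    (hVT : V T = K)
    (hV : ∀ t < T, ∀ s h : ℝ,
      V t s h = ∫⁻ ω, oneStep ρc ρd Slo Shi Ulo Uhi (c t) (V (t + 1)) s h (W t ω) ∂μ) :
    ∀ t ≤ T, ∀ s s' h h' : ℝ,
      Slo ≤ s → s ≤ s' → s' ≤ Shi → h ≤ h' → V t s' h' ≤ V t s h :=
  battery_bellman_antitone_general μ T W ρc ρd Slo Shi Ulo Uhi c hρc hρd hUlo hc K hK V hVT hV
end
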